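/- If a graph G has a spanning elementary subgraph (a spanning subgraph each of whose components is an edge or a cycle), then γ'_s(G) ≥ 0. -/

import Mathlib

open scoped Classical

noncomputable def edgeFin {V : Type*} [Fintype V] (G : SimpleGraph V) : Finset (Sym2 V) :=
  Finset.univ.filter (· ∈ G.edgeSet)

noncomputable def closedNbhd {V : Type*} [Fintype V] (G : SimpleGraph V) (e : Sym2 V) :
    Finset (Sym2 V) :=
  (edgeFin G).filter (fun e' => ∃ v, v ∈ e ∧ v ∈ e')

def IsSEDF {V : Type*} [Fintype V] (G : SimpleGraph V) (f : Sym2 V → ℤ) : Prop :=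
  (∀ e ∈ edgeFin G, f e = 1 ∨ f e = -1) ∧
  ∀ e ∈ edgeFin G, 1 ≤ ∑ e' ∈ closedNbhd G e, f e'

noncomputable def vsum {V : Type*} [Fintype V] (G : SimpleGraph V) (f : Sym2 V → ℤ) (v : V) : ℤ :=
  ∑ e ∈ (edgeFin G).filter (fun e => v ∈ e), f e

noncomputable def gammaS {V : Type*} [Fintype V] (G : SimpleGraph V) : ℤ :=
  sInf {z : ℤ | ∃ f, IsSEDF G f ∧ z = ∑ e ∈ edgeFin G, f e}

def IsLGraph {V : Type*} [Fintype V] (m n : ℕ) (G : SimpleGraph V) : Prop :=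
  Fintype.card V = (n + 1) * (m * n + m + 1) ∧
  ∃ P : Fin (n + 1) → Finset V,
    (∀ v : V, ∃! i, v ∈ P i) ∧
    (∀ i, (P i).card = m * n + m + 1) ∧
    (∀ u ∈ P 0, ∀ v ∈ P 0, u ≠ v → G.Adj u v) ∧
    (∀ i, i ≠ 0 → ∀ u ∈ P i, ∀ v ∈ P i, ¬ G.Adj u v) ∧
    (∀ i, i ≠ 0 → ∀ v ∈ P i, ((P 0).filter (G.Adj v)).card = m) ∧
    (∀ i, i ≠ 0 → ∀ v ∈ P 0, ((P i).filter (G.Adj v)).card = m) ∧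
    (∀ i j, i ≠ 0 → j ≠ 0 → i ≠ j → ∀ u ∈ P i, ∀ v ∈ P j, ¬ G.Adj u v)

def MConnected {V : Type*} [Fintype V] (m : ℕ) (G : SimpleGraph V) : Prop :=
  m < Fintype.card V ∧
  ∀ S : Finset V, S.card < m → (G.induce ((↑S : Set V)ᶜ)).Connected

def IsElementary {V : Type*} (H : SimpleGraph V) : Prop :=
  (∀ v, (H.neighborSet v).ncard ≤ 2) ∧
  ∀ v, (H.neighborSet v).ncard = 1 → ∀ w, H.Adj v w → (H.neighborSet w).ncard = 1

/-! Let `g(v)` be the sum of an SEDF `f` over the edges at `v`. The closed neighbourhood of an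
edge `uv` consists of the edges at `u` and at `v`, overlapping only in `uv`, so
`g(u) + g(v) - f(uv) ≥ 1` and hence `g(u) + g(v) ≥ 0` for every edge. Double counting gives
`∑ g = 2 ∑ f`. In a spanning elementary subgraph `H` every vertex has degree 1 or 2 and
adjacent vertices have the same degree, so with the weight `c = 3 - deg_H`, constant along
the edges of `H` and satisfying `deg_H · c = 2`, summing `c(u) (g(u) + g(v))` over the
darts `(u, v)` of `H` yields `4 ∑ g ≥ 0`. -/

open Finset SimpleGraph

section

variable {V : Type*} [Fintype V]

lemma mem_edgeFin {G : SimpleGraph V} {e : Sym2 V} : e ∈ edgeFin G ↔ e ∈ G.edgeSet := by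
  simp [edgeFin]

lemma sum_vsum_eq_two_mul_sum (G : SimpleGraph V) (f : Sym2 V → ℤ) :
    ∑ v, vsum G f v = 2 * ∑ e ∈ edgeFin G, f e := by
  unfold vsum
  rw [sum_comm' (t' := edgeFin G) (s' := Sym2.toFinset) (by simp [Sym2.mem_toFinset, and_comm]),
    mul_sum]
  refine sum_congr rfl fun e he => ?_
  rw [sum_const, Sym2.card_toFinset_of_not_isDiag e
    (G.not_isDiag_of_mem_edgeSet (mem_edgeFin.1 he))]
  simp

lemma sum_closedNbhd_mk {G : SimpleGraph V} (f : Sym2 V → ℤ) {u v : V} (huv : G.Adj u v) :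
    ∑ e ∈ closedNbhd G s(u, v), f e = vsum G f u + vsum G f v - f s(u, v) := by
  have hunion : closedNbhd G s(u, v) =
      (edgeFin G).filter (u ∈ ·) ∪ (edgeFin G).filter (v ∈ ·) := by
    rw [closedNbhd, ← filter_or]
    simp [Sym2.mem_iff]
  have hinter : (edgeFin G).filter (u ∈ ·) ∩ (edgeFin G).filter (v ∈ ·) = {s(u, v)} := by
    rw [← filter_and]
    ext e
    simp only [mem_filter, Sym2.mem_and_mem_iff huv.ne, mem_singleton, and_iff_right_iff_imp]
    rintro rfl
    exact mem_edgeFin.2 huv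
  have := sum_union_inter (s₁ := (edgeFin G).filter (u ∈ ·)) (s₂ := (edgeFin G).filter (v ∈ ·))
    (f := f)
  rw [hinter, sum_singleton, ← hunion] at this
  unfold vsum
  linarith

lemma IsSEDF.vsum_add_vsum_nonneg {G : SimpleGraph V} {f : Sym2 V → ℤ} (hf : IsSEDF G f)
    {u v : V} (huv : G.Adj u v) : 0 ≤ vsum G f u + vsum G f v := by
  have he : s(u, v) ∈ edgeFin G := mem_edgeFin.2 huv
  have hN := hf.2 _ he
  rw [sum_closedNbhd_mk f huv] at hN
  rcases hf.1 _ he with h | h <;> linarith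

lemma sum_darts_fst {M : Type*} [AddCommMonoid M] (H : SimpleGraph V) [DecidableRel H.Adj]
    (φ : V → M) : ∑ d : H.Dart, φ d.fst = ∑ v, H.degree v • φ v := by
  rw [← sum_fiberwise univ (fun d : H.Dart => d.fst)]
  refine sum_congr rfl fun v _ => ?_
  rw [sum_congr rfl fun d hd => by rw [(mem_filter.1 hd).2], sum_const]
  congr 1
  convert H.dart_fst_fiber_card_eq_degree v

lemma sum_darts_snd {M : Type*} [AddCommMonoid M] (H : SimpleGraph V) [DecidableRel H.Adj]
    (φ : V → M) :
    ∑ d : H.Dart, φ d.snd = ∑ d : H.Dart, φ d.fst :=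
  Equiv.sum_comp (Dart.symm_involutive.toPerm _) fun d => φ d.fst

lemma sum_nonneg_of_adj_add_nonneg (H : SimpleGraph V) [DecidableRel H.Adj]
    (hdeg : ∀ v, H.degree v = 1 ∨ H.degree v = 2)
    (hadj : ∀ ⦃u v⦄, H.Adj u v → H.degree u = H.degree v)
    {g : V → ℤ} (hg : ∀ ⦃u v⦄, H.Adj u v → 0 ≤ g u + g v) : 0 ≤ ∑ v, g v := by
  set c : V → ℤ := fun v => 3 - H.degree v
  have hc : ∀ v, (H.degree v : ℤ) * c v = 2 := fun v => by
    rcases hdeg v with h | h <;> simp [c, h]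
  have hfst : ∑ d : H.Dart, c d.fst * g d.fst = 2 * ∑ v, g v := by
    rw [sum_darts_fst H (fun v => c v * g v), mul_sum]
    simp_rw [nsmul_eq_mul, ← mul_assoc, hc]
  have hsnd : ∑ d : H.Dart, c d.fst * g d.snd = 2 * ∑ v, g v :=
    calc ∑ d : H.Dart, c d.fst * g d.snd = ∑ d : H.Dart, c d.snd * g d.snd :=
          sum_congr rfl fun d _ => by simp [c, hadj d.adj]
      _ = ∑ d : H.Dart, c d.fst * g d.fst := sum_darts_snd H fun v => c v * g v
      _ = 2 * ∑ v, g v := hfst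
  have hpos : 0 ≤ ∑ d : H.Dart, c d.fst * (g d.fst + g d.snd) :=
    sum_nonneg fun d _ => mul_nonneg (by rcases hdeg d.fst with h | h <;> simp [c, h]) (hg d.adj)
  simp only [mul_add, sum_add_distrib, hfst, hsnd] at hpos
  linarith

lemma ncard_neighborSet_eq_degree (H : SimpleGraph V) [DecidableRel H.Adj] (v : V) :
    (H.neighborSet v).ncard = H.degree v := by
  rw [← card_neighborFinset_eq_degree, ← Set.ncard_coe_finset, coe_neighborFinset]

section IsElementary

variable {H : SimpleGraph V} [DecidableRel H.Adj]

lemma IsElementary.degree_le_two (hH : IsElementary H) (v : V) : H.degree v ≤ 2 :=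
  ncard_neighborSet_eq_degree H v ▸ hH.1 v

lemma IsElementary.degree_eq_of_adj (hH : IsElementary H) {u v : V} (huv : H.Adj u v) :
    H.degree u = H.degree v := by
  have hu := H.degree_pos_iff_exists_adj u |>.2 ⟨v, huv⟩
  have hv := H.degree_pos_iff_exists_adj v |>.2 ⟨u, huv.symm⟩
  have huv' : H.degree u = 1 → H.degree v = 1 := by
    simpa only [ncard_neighborSet_eq_degree] using fun h => hH.2 u h v huv
  have hvu : H.degree v = 1 → H.degree u = 1 := by
    simpa only [ncard_neighborSet_eq_degree] using fun h => hH.2 v h u huv.symm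
  have := hH.degree_le_two u
  have := hH.degree_le_two v
  omega

lemma IsElementary.degree_eq_one_or_two (hH : IsElementary H) (hspan : H.support = Set.univ)
    (v : V) : H.degree v = 1 ∨ H.degree v = 2 := by
  have hv : v ∈ H.support := hspan ▸ Set.mem_univ v
  have := H.degree_pos_iff_exists_adj v |>.2 hv
  have := hH.degree_le_two v
  omega

end IsElementary

lemma IsSEDF.sum_nonneg {G H : SimpleGraph V} {f : Sym2 V → ℤ} (hf : IsSEDF G f) (hHG : H ≤ G)
    (hH : IsElementary H) (hspan : H.support = Set.univ) : 0 ≤ ∑ e ∈ edgeFin G, f e := by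
  have := sum_nonneg_of_adj_add_nonneg H (hH.degree_eq_one_or_two hspan)
    (fun _ _ huv => hH.degree_eq_of_adj huv)
    fun _ _ huv => hf.vsum_add_vsum_nonneg (hHG huv)
  rw [sum_vsum_eq_two_mul_sum] at this
  linarith

end

lemma Int.sInf_nonneg {s : Set ℤ} (hs : ∀ z ∈ s, 0 ≤ z) : 0 ≤ sInf s := by
  rcases s.eq_empty_or_nonempty with rfl | hne
  · rw [Int.csInf_empty]
  · exact le_csInf hne hs

theorem stmt10 {V : Type*} [Fintype V] (G H : SimpleGraph V) (hHG : H ≤ G)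
    (hel : IsElementary H) (hspan : H.support = Set.univ) :
    0 ≤ gammaS G :=
  Int.sInf_nonneg fun _ ⟨_, hf, hz⟩ => hz ▸ hf.sum_nonneg hHG hel hspan
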